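/- arXiv:2410.22620 — 2 statements merged into one kernel-verified Lean document; each statement's English description precedes it below -/
import Mathlib

section
/- Let a₁, a₂, a₃, a₄ be real numbers with a₁a₂ > 0, set a₅ := −1/(a₁a₂), and assume D := (a₁a₂ + a₁ + 1)² − 4a₁a₂ ≥ 0. Then (a₃a₄/2)·( (a₁a₅ + a₅ + 1)(a₁a₂ + a₁ + 1) + √( ((a₁a₅ + a₅ + 1)² − 4a₁a₅)·D ) ) = a₃a₄·(a₁a₂ + a₁ − 1). -/
/-! With `p = a₁a₂` and `a₅ = -1/p`, the first discriminant is `D / p²`, so the square root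
is `D / p` because `D ≥ 0` and `p > 0`; what remains is a rational identity in `a₁` and `p`. -/

lemma discr_neg_inv (a p : ℝ) (hp : p ≠ 0) :
    (a * (-1 / p) + -1 / p + 1) ^ 2 - 4 * (a * (-1 / p)) = ((p + a + 1) ^ 2 - 4 * p) / p ^ 2 := by
  field_simp
  ring

lemma sqrt_discr_neg_inv_mul_discr (a p : ℝ) (hp : 0 < p) (hD : 0 ≤ (p + a + 1) ^ 2 - 4 * p) :
    Real.sqrt (((a * (-1 / p) + -1 / p + 1) ^ 2 - 4 * (a * (-1 / p))) *
      ((p + a + 1) ^ 2 - 4 * p)) = ((p + a + 1) ^ 2 - 4 * p) / p := by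
  rw [discr_neg_inv a p hp.ne', ← Real.sqrt_sq (div_nonneg hD hp.le)]
  congr 1
  ring

lemma neg_inv_mul_add_discr_div (a p : ℝ) (hp : p ≠ 0) :
    (a * (-1 / p) + -1 / p + 1) * (p + a + 1) + ((p + a + 1) ^ 2 - 4 * p) / p =
      2 * (p + a - 1) := by
  field_simp
  ring

/-- Closed-form evaluation of `{y₂, y₁} + {y₃, y₄}` under the Rank Condition
`a₅ = −1/(a₁a₂)`. -/
theorem bracket_sum_evaluation (a₁ a₂ a₃ a₄ : ℝ) (hpos : 0 < a₁ * a₂)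
    (hD : 0 ≤ (a₁ * a₂ + a₁ + 1) ^ 2 - 4 * (a₁ * a₂)) :
    let a₅ := -1 / (a₁ * a₂)
    a₃ * a₄ / 2 *
        ((a₁ * a₅ + a₅ + 1) * (a₁ * a₂ + a₁ + 1) +
          Real.sqrt
            (((a₁ * a₅ + a₅ + 1) ^ 2 - 4 * (a₁ * a₅)) *
              ((a₁ * a₂ + a₁ + 1) ^ 2 - 4 * (a₁ * a₂)))) =
      a₃ * a₄ * (a₁ * a₂ + a₁ - 1) := by
  intro a₅
  rw [sqrt_discr_neg_inv_mul_discr a₁ (a₁ * a₂) hpos hD,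
    neg_inv_mul_add_discr_div a₁ (a₁ * a₂) hpos.ne']
  ring
end

section
/- Let K be a field and let x, y ∈ K satisfy x ≠ 0, y ≠ 0, 1 + x ≠ 0, 1 + y ≠ 0, and 1 + y + xy ≠ 0. Define the transformation T(u, v) := (v·(1 + u), 1/u). Then T is defined along the whole orbit of (x, y) and T⁵(x, y) = (x, y); explicitly, the orbit consists of the five seeds (x, y), (y(1+x), 1/x), ((1 + y + xy)/x, 1/(y(1+x))), ((1+y)/(xy), x/(1 + y + xy)), (1/y, xy/(1+y)). -/
/-- The pentagon map of the rank-2 cluster dynamics of type `A₂`: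
`T(u, v) = (v(1+u), 1/u)`. -/
def pentagonMap {K : Type*} [Field K] : K × K → K × K :=
  fun p => (p.2 * (1 + p.1), 1 / p.1)

/-- Pentagon periodicity: `T` is defined along the whole orbit of `(x, y)` and
`T⁵(x, y) = (x, y)`; explicitly, the orbit consists of the five seeds listed. -/
theorem pentagonMap_period_five {K : Type*} [Field K] (x y : K)
    (hx : x ≠ 0) (hy : y ≠ 0) (h1x : 1 + x ≠ 0) (h1y : 1 + y ≠ 0)
    (h1yxy : 1 + y + x * y ≠ 0) :
    pentagonMap^[1] (x, y) = (y * (1 + x), 1 / x) ∧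
    pentagonMap^[2] (x, y) = ((1 + y + x * y) / x, 1 / (y * (1 + x))) ∧
    pentagonMap^[3] (x, y) = ((1 + y) / (x * y), x / (1 + y + x * y)) ∧
    pentagonMap^[4] (x, y) = (1 / y, x * y / (1 + y)) ∧
    pentagonMap^[5] (x, y) = (x, y) := by
  have hxy : y * (1 + x) ≠ 0 := mul_ne_zero hy h1x
  have h1 : pentagonMap^[1] (x, y) = (y * (1 + x), 1 / x) := rfl
  have h2 : pentagonMap^[2] (x, y) = ((1 + y + x * y) / x, 1 / (y * (1 + x))) := by
    rw [show (2:ℕ) = 1 + 1 from rfl, Function.iterate_add_apply, h1]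
    simp only [Function.iterate_one, pentagonMap]
    exact Prod.ext (by field_simp; ring) rfl
  have h3 : pentagonMap^[3] (x, y) = ((1 + y) / (x * y), x / (1 + y + x * y)) := by
    rw [show (3:ℕ) = 1 + 2 from rfl, Function.iterate_add_apply, h2]
    simp only [Function.iterate_one, pentagonMap]
    refine Prod.ext ?_ ?_ <;> field_simp <;> ring
  have h4 : pentagonMap^[4] (x, y) = (1 / y, x * y / (1 + y)) := by
    rw [show (4:ℕ) = 1 + 3 from rfl, Function.iterate_add_apply, h3]
    simp only [Function.iterate_one, pentagonMap]
    refine Prod.ext ?_ ?_ <;> field_simp <;> ring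
  have h5 : pentagonMap^[5] (x, y) = (x, y) := by
    rw [show (5:ℕ) = 1 + 4 from rfl, Function.iterate_add_apply, h4]
    simp only [Function.iterate_one, pentagonMap]
    refine Prod.ext ?_ ?_ <;> field_simp <;> ring
  exact ⟨h1, h2, h3, h4, h5⟩
end
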